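/- arXiv:math/0105146 — 2 statements merged into one kernel-verified Lean document; each statement's English description precedes it below -/
import Mathlib

section
/- There exists a unique canonical solution (Q^{(a)}_m)_{(a,m)∈H} of the Q-system, i.e. a unique solution such that for each a the power series Q^{(a)}_m converge coefficientwise as m → ∞. -/
open Finset

noncomputable section

structure QData (n : ℕ) where
  CA : Fin n → Fin n → ℤ
  CA' : Fin n → Fin n → ℤ
  d : Fin n → ℕ
  d' : Fin n → ℕ
  eps : Fin n → ℕ
  eps' : Fin n → ℕ
  k0 : ℕ
  r : ℕ

/-- The exponents `G_{am,bk}` of Section 3 (set to `0` for `k = 0`). -/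
def Gmat {n : ℕ} (D : QData n) (a : Fin n) (m : ℕ) (b : Fin n) (k : ℕ) : ℤ :=
  if k = 0 then 0
  else if 1 < D.r then (if m = k then -D.CA b a / (D.eps b : ℤ) else 0)
  else if D.d b = 2 * D.d a then
    -D.CA b a * ((if m = 2*k-1 then 1 else 0) + 2 * (if m = 2*k then 1 else 0)
      + (if m = 2*k+1 then 1 else 0))
  else if D.d b = 3 * D.d a then
    -D.CA b a * ((if m = 3*k-2 then 1 else 0) + 2 * (if m = 3*k-1 then 1 else 0)
      + 3 * (if m = 3*k then 1 else 0) + 2 * (if m = 3*k+1 then 1 else 0)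
      + (if m = 3*k+2 then 1 else 0))
  else if D.d a * m = D.d b * k then -D.CA a b else 0

/-- A solution of the `Q`-system (3.2): a family of invertible power series with unit
constant terms, `Q^{(a)}_0 = 1`, satisfying
`(Q^{(a)}_m)² = Q^{(a)}_{m+1} Q^{(a)}_{m−1} + y_a^m (Q^{(a)}_m)² ∏_{(b,k)} (Q^{(b)}_k)^{G_{am,bk}}`. -/
def IsQSysSol {n : ℕ} (D : QData n) (Q : Fin n → ℕ → (MvPowerSeries (Fin n) ℂ)ˣ) : Prop :=
  (∀ a, Q a 0 = 1) ∧
  (∀ a m, MvPowerSeries.constantCoeff (Q a m : MvPowerSeries (Fin n) ℂ) = 1) ∧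
  (∀ (a : Fin n) (m : ℕ), 1 ≤ m →
    (Q a m : MvPowerSeries (Fin n) ℂ) ^ 2
      = (Q a (m+1) : MvPowerSeries (Fin n) ℂ) * (Q a (m-1) : MvPowerSeries (Fin n) ℂ)
        + (MvPowerSeries.X a) ^ m * (Q a m : MvPowerSeries (Fin n) ℂ) ^ 2
          * ((∏ᶠ (b : Fin n) (k : ℕ), Q b k ^ Gmat D a m b k :
                (MvPowerSeries (Fin n) ℂ)ˣ) : MvPowerSeries (Fin n) ℂ))

/-- A solution of the `Q`-system is canonical if for each `a` the series `Q^{(a)}_m`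
converge coefficientwise as `m → ∞`. -/
def IsCanonical {n : ℕ} (Q : Fin n → ℕ → (MvPowerSeries (Fin n) ℂ)ˣ) : Prop :=
  ∀ (a : Fin n) (s : Fin n →₀ ℕ), ∃ c : ℂ, ∃ M0 : ℕ, ∀ m, M0 ≤ m →
    MvPowerSeries.coeff s (Q a m : MvPowerSeries (Fin n) ℂ) = c


namespace QProof
open MvPowerSeries

variable {n : ℕ}

abbrev Rn (n : ℕ) := MvPowerSeries (Fin n) ℂ

def degm (s : Fin n →₀ ℕ) : ℕ := s.sum fun _ e => e

lemma degm_add (s t : Fin n →₀ ℕ) : degm (s + t) = degm s + degm t :=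
  Finsupp.sum_add_index' (fun _ => rfl) (fun _ _ _ => rfl)

lemma degm_zero : degm (0 : Fin n →₀ ℕ) = 0 := Finsupp.sum_zero_index

lemma degm_single (a : Fin n) (m : ℕ) : degm (Finsupp.single a m) = m := by
  classical
  simp [degm, Finsupp.sum_single_index]

lemma degm_eq_zero {s : Fin n →₀ ℕ} (h : degm s = 0) : s = 0 := by
  classical
  ext i
  simp only [Finsupp.coe_zero, Pi.zero_apply]
  by_contra hi
  have hi' : i ∈ s.support := Finsupp.mem_support_iff.2 hi
  have : s i ≤ degm s := Finset.single_le_sum (f := fun i => s i) (fun _ _ => Nat.zero_le _) hi'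
  omega

def J (n : ℕ) (N : ℕ) : Ideal (Rn n) where
  carrier := {f | ∀ s, degm s ≤ N → coeff s f = 0}
  zero_mem' := fun s _ => by simp
  add_mem' := by
    intro f g hf hg s hs
    simp [map_add, hf s hs, hg s hs]
  smul_mem' := by
    intro c f hf s hs
    classical
    rw [smul_eq_mul, coeff_mul]
    refine Finset.sum_eq_zero fun p hp => ?_
    rw [Finset.HasAntidiagonal.mem_antidiagonal] at hp
    have : degm p.2 ≤ N := by
      have := degm_add p.1 p.2
      rw [hp] at this
      omega
    rw [hf p.2 this, mul_zero]

lemma mem_J {N : ℕ} {f : Rn n} : f ∈ J n N ↔ ∀ s, degm s ≤ N → coeff s f = 0 := Iff.rfl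

lemma J_mono {N' N : ℕ} (h : N' ≤ N) {f : Rn n} (hf : f ∈ J n N) : f ∈ J n N' :=
  fun s hs => hf s (le_trans hs h)

/-- `eqv N f g`: the coefficients of `f` and `g` agree up to total degree `N`. -/
def eqv (N : ℕ) (f g : Rn n) : Prop := f - g ∈ J n N

lemma eqv_def {N : ℕ} {f g : Rn n} :
    eqv N f g ↔ ∀ s, degm s ≤ N → coeff s f = coeff s g := by
  constructor
  · intro h s hs
    have := h s hs
    rw [map_sub, sub_eq_zero] at this
    exact this
  · intro h s hs
    rw [map_sub, h s hs, sub_self]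

lemma eqv_refl {N : ℕ} (f : Rn n) : eqv N f f := by rw [eqv, sub_self]; exact (J n N).zero_mem

lemma eqv.symm {N : ℕ} {f g : Rn n} (h : eqv N f g) : eqv N g f := by
  have : g - f = -(f - g) := by ring
  rw [eqv, this]; exact (J n N).neg_mem h

lemma eqv.trans {N : ℕ} {f g h : Rn n} (h1 : eqv N f g) (h2 : eqv N g h) : eqv N f h := by
  have : f - h = (f - g) + (g - h) := by ring
  rw [eqv, this]; exact (J n N).add_mem h1 h2

lemma eqv.mono {N' N : ℕ} (h : N' ≤ N) {f g : Rn n} (hf : eqv N f g) : eqv N' f g :=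
  J_mono h hf

lemma eqv.add {N : ℕ} {f g f' g' : Rn n} (h : eqv N f g) (h' : eqv N f' g') :
    eqv N (f + f') (g + g') := by
  have : f + f' - (g + g') = (f - g) + (f' - g') := by ring
  rw [eqv, this]; exact (J n N).add_mem h h'

lemma eqv.sub {N : ℕ} {f g f' g' : Rn n} (h : eqv N f g) (h' : eqv N f' g') :
    eqv N (f - f') (g - g') := by
  have : f - f' - (g - g') = (f - g) - (f' - g') := by ring
  rw [eqv, this]; exact (J n N).sub_mem h h'

lemma eqv.mul {N : ℕ} {f g f' g' : Rn n} (h : eqv N f g) (h' : eqv N f' g') :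
    eqv N (f * f') (g * g') := by
  have : f * f' - g * g' = f * (f' - g') + g' * (f - g) := by ring
  rw [eqv, this]
  exact (J n N).add_mem (Ideal.mul_mem_left _ _ h') (Ideal.mul_mem_left _ _ h)

lemma eqv.pow {N : ℕ} {f g : Rn n} (h : eqv N f g) (m : ℕ) : eqv N (f ^ m) (g ^ m) := by
  induction m with
  | zero => simpa using eqv_refl 1
  | succ k ih => rw [pow_succ, pow_succ]; exact ih.mul h

lemma eqv_all_eq {f g : Rn n} (h : ∀ N, eqv N f g) : f = g := by
  ext s
  exact (eqv_def.1 (h (degm s))) s le_rfl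


lemma constantCoeff_inv {u : (Rn n)ˣ} (h : constantCoeff u.val = 1) :
    constantCoeff ((u⁻¹ : (Rn n)ˣ) : Rn n) = 1 := by
  have := congrArg (constantCoeff) u.mul_inv
  rw [map_mul, h, one_mul, map_one] at this
  exact this

lemma eqv.inv {N : ℕ} {u v : (Rn n)ˣ} (h : eqv N u.val v.val) :
    eqv N ((u⁻¹ : (Rn n)ˣ) : Rn n) ((v⁻¹ : (Rn n)ˣ) : Rn n) := by
  have key : ((u⁻¹ : (Rn n)ˣ) : Rn n) - ((v⁻¹ : (Rn n)ˣ) : Rn n)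
      = ((u⁻¹ : (Rn n)ˣ) : Rn n) * ((v⁻¹ : (Rn n)ˣ) : Rn n) * (v.val - u.val) := by
    have hu : ((u⁻¹ : (Rn n)ˣ) : Rn n) * u.val = 1 := u.inv_mul
    have hv : ((v⁻¹ : (Rn n)ˣ) : Rn n) * v.val = 1 := v.inv_mul
    calc ((u⁻¹ : (Rn n)ˣ) : Rn n) - ((v⁻¹ : (Rn n)ˣ) : Rn n)
        = ((u⁻¹ : (Rn n)ˣ) : Rn n) * (((v⁻¹ : (Rn n)ˣ) : Rn n) * v.val)
          - (((u⁻¹ : (Rn n)ˣ) : Rn n) * u.val) * ((v⁻¹ : (Rn n)ˣ) : Rn n) := by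
          rw [hu, hv]; ring
      _ = _ := by ring
  rw [eqv, key]
  exact Ideal.mul_mem_left _ _ (eqv.symm h)

lemma eqv.zpow {N : ℕ} {u v : (Rn n)ˣ} (h : eqv N u.val v.val) (z : ℤ) :
    eqv N ((u ^ z : (Rn n)ˣ) : Rn n) ((v ^ z : (Rn n)ˣ) : Rn n) := by
  cases z with
  | ofNat k =>
      rw [Int.ofNat_eq_coe, zpow_natCast, zpow_natCast, Units.val_pow_eq_pow_val,
        Units.val_pow_eq_pow_val]
      exact h.pow k
  | negSucc k =>
      rw [zpow_negSucc, zpow_negSucc]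
      have : eqv N ((u ^ (k+1) : (Rn n)ˣ) : Rn n) ((v ^ (k+1) : (Rn n)ˣ) : Rn n) := by
        rw [Units.val_pow_eq_pow_val, Units.val_pow_eq_pow_val]; exact h.pow (k+1)
      exact this.inv

lemma eqv_cancel {N : ℕ} {x y : Rn n} {w w' : (Rn n)ˣ} (hw : eqv N w.val w'.val)
    (h : eqv N (x * w.val) (y * w'.val)) : eqv N x y := by
  have h1 : eqv N (x * w.val * ((w⁻¹ : (Rn n)ˣ) : Rn n))
      (y * w'.val * ((w⁻¹ : (Rn n)ˣ) : Rn n)) := h.mul (eqv_refl _)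
  have h2 : eqv N (y * w'.val * ((w⁻¹ : (Rn n)ˣ) : Rn n))
      (y * w.val * ((w⁻¹ : (Rn n)ˣ) : Rn n)) := ((eqv_refl y).mul hw.symm).mul (eqv_refl _)
  have e1 : x * w.val * ((w⁻¹ : (Rn n)ˣ) : Rn n) = x := Units.mul_inv_cancel_right x w
  have e2 : y * w.val * ((w⁻¹ : (Rn n)ˣ) : Rn n) = y := Units.mul_inv_cancel_right y w
  rw [e1] at h1
  rw [e2] at h2
  exact h1.trans h2

lemma eqv_mul_inv_one {N : ℕ} {w w' : (Rn n)ˣ} (hw : eqv N w.val w'.val) :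
    eqv N ((w * w'⁻¹ : (Rn n)ˣ) : Rn n) 1 := by
  have h1 : eqv N (w.val * ((w'⁻¹ : (Rn n)ˣ) : Rn n))
      (w'.val * ((w'⁻¹ : (Rn n)ˣ) : Rn n)) := hw.mul (eqv_refl _)
  have e : w'.val * ((w'⁻¹ : (Rn n)ˣ) : Rn n) = 1 := w'.mul_inv
  rw [e] at h1
  exact h1

lemma coeff_X_pow_mul' (a : Fin n) (m : ℕ) (f : Rn n) (s : Fin n →₀ ℕ) :
    coeff s ((X a : Rn n) ^ m * f)
      = if Finsupp.single a m ≤ s then coeff (s - Finsupp.single a m) f else 0 := by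
  rw [X_pow_eq, coeff_monomial_mul]
  split_ifs with h
  · rw [one_mul]
  · rfl

lemma degm_ge_of_single_le {a : Fin n} {m : ℕ} {s : Fin n →₀ ℕ}
    (h : Finsupp.single a m ≤ s) : m ≤ degm s ∧ degm (s - Finsupp.single a m) = degm s - m := by
  have he : (s - Finsupp.single a m) + Finsupp.single a m = s := tsub_add_cancel_of_le h
  have := degm_add (s - Finsupp.single a m) (Finsupp.single a m)
  rw [he, degm_single] at this
  omega

lemma X_pow_mul_mem_big {N m : ℕ} (h : N < m) (a : Fin n) (f : Rn n) :
    (X a : Rn n) ^ m * f ∈ J n N := by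
  intro s hs
  rw [coeff_X_pow_mul']
  split_ifs with hle
  · exact absurd ((degm_ge_of_single_le hle).1) (by omega)
  · rfl

lemma X_pow_mul_mem {N m : ℕ} (hm : 1 ≤ m) (a : Fin n) {f : Rn n} (hf : f ∈ J n (N - 1)) :
    (X a : Rn n) ^ m * f ∈ J n N := by
  intro s hs
  rw [coeff_X_pow_mul']
  split_ifs with hle
  · obtain ⟨h1, h2⟩ := degm_ge_of_single_le hle
    exact hf _ (by omega)
  · rfl

lemma mul_mem_J_succ {N : ℕ} (hN : 1 ≤ N) {f g : Rn n} (hf : f ∈ J n (N - 1))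
    (hg : g ∈ J n (N - 1)) : f * g ∈ J n N := by
  intro s hs
  classical
  rw [coeff_mul]
  refine Finset.sum_eq_zero fun p hp => ?_
  rw [Finset.HasAntidiagonal.mem_antidiagonal] at hp
  have hadd : degm p.1 + degm p.2 = degm s := by rw [← degm_add, hp]
  by_cases h1 : degm p.1 ≤ N - 1
  · rw [hf _ h1, zero_mul]
  · have : degm p.2 ≤ N - 1 := by omega
    rw [hg _ this, mul_zero]

lemma eqv_prod {N : ℕ} {ι : Type*} (t : Finset ι) (F G : ι → Rn n)
    (h : ∀ i ∈ t, eqv N (F i) (G i)) :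
    eqv N (∏ i ∈ t, F i) (∏ i ∈ t, G i) := by
  classical
  induction t using Finset.induction_on with
  | empty => simpa using eqv_refl 1
  | insert x t' hx ih =>
      rw [Finset.prod_insert hx, Finset.prod_insert hx]
      exact (h x (Finset.mem_insert_self _ _)).mul
        (ih fun i hi => h i (Finset.mem_insert_of_mem hi))

/-- Build a unit from a power series with constant coefficient one. -/
def mkUnit (f : Rn n) (h : constantCoeff f = 1) : (Rn n)ˣ :=
  ⟨f, f.invOfUnit 1, f.mul_invOfUnit 1 (by simpa using h), by
    rw [mul_comm]; exact f.mul_invOfUnit 1 (by simpa using h)⟩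

@[simp] lemma mkUnit_val (f : Rn n) (h : constantCoeff f = 1) :
    ((mkUnit f h : (Rn n)ˣ) : Rn n) = f := rfl


/-- The product `∏_{(b,k)} (Q^{(b)}_k)^{G_{am,bk}}` as a unit. -/
def PiU (D : QData n) (q : Fin n → ℕ → (Rn n)ˣ) (a : Fin n) (m : ℕ) : (Rn n)ˣ :=
  ∏ᶠ (b : Fin n) (k : ℕ), q b k ^ Gmat D a m b k

lemma Gmat_bound (D : QData n) (hd : ∀ a, 0 < D.d a) {a b : Fin n} {m k : ℕ} (hm : 1 ≤ m)
    (hk : D.d a * m < k) : Gmat D a m b k = 0 := by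
  have hda := hd a
  have hdb := hd b
  have hma : m ≤ D.d a * m := Nat.le_mul_of_pos_left m hda
  have hkk : k ≤ D.d b * k := Nat.le_mul_of_pos_left k hdb
  rw [Gmat]
  rw [if_neg (by omega : ¬ k = 0)]
  by_cases hr : 1 < D.r
  · rw [if_pos hr, if_neg (by omega : ¬ m = k)]
  · rw [if_neg hr]
    by_cases h2 : D.d b = 2 * D.d a
    · rw [if_pos h2, if_neg (by omega : ¬ m = 2*k-1), if_neg (by omega : ¬ m = 2*k),
        if_neg (by omega : ¬ m = 2*k+1)]
      ring
    · rw [if_neg h2]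
      by_cases h3 : D.d b = 3 * D.d a
      · rw [if_pos h3, if_neg (by omega : ¬ m = 3*k-2), if_neg (by omega : ¬ m = 3*k-1),
          if_neg (by omega : ¬ m = 3*k), if_neg (by omega : ¬ m = 3*k+1),
          if_neg (by omega : ¬ m = 3*k+2)]
        ring
      · rw [if_neg h3, if_neg (by omega : ¬ D.d a * m = D.d b * k)]

lemma PiU_eq_prod (D : QData n) (hd : ∀ a, 0 < D.d a) (q : Fin n → ℕ → (Rn n)ˣ)
    (a : Fin n) {m : ℕ} (hm : 1 ≤ m) :
    PiU D q a m
      = ∏ b : Fin n, ∏ k ∈ Finset.range (D.d a * m + 1), q b k ^ Gmat D a m b k := by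
  rw [PiU, finprod_eq_prod_of_fintype]
  refine Finset.prod_congr rfl fun b _ => ?_
  refine finprod_eq_prod_of_mulSupport_subset _ ?_
  intro k hk
  simp only [Function.mem_mulSupport] at hk
  simp only [Finset.coe_range, Set.mem_Iio]
  by_contra hmem
  have : Gmat D a m b k = 0 := Gmat_bound D hd hm (by omega)
  rw [this, zpow_zero] at hk
  exact hk rfl

lemma val_prod_units {ι : Type*} (t : Finset ι) (F : ι → (Rn n)ˣ) :
    ((∏ i ∈ t, F i : (Rn n)ˣ) : Rn n) = ∏ i ∈ t, ((F i : (Rn n)ˣ) : Rn n) :=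
  map_prod (Units.coeHom (Rn n)) F t

lemma PiU_congr (D : QData n) (hd : ∀ a, 0 < D.d a) {N : ℕ} {q q' : Fin n → ℕ → (Rn n)ˣ}
    (h : ∀ b k, eqv N ((q b k : (Rn n)ˣ) : Rn n) ((q' b k : (Rn n)ˣ) : Rn n))
    (a : Fin n) {m : ℕ} (hm : 1 ≤ m) :
    eqv N ((PiU D q a m : (Rn n)ˣ) : Rn n) ((PiU D q' a m : (Rn n)ˣ) : Rn n) := by
  rw [PiU_eq_prod D hd q a hm, PiU_eq_prod D hd q' a hm, val_prod_units, val_prod_units]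
  refine eqv_prod _ _ _ fun b _ => ?_
  rw [val_prod_units, val_prod_units]
  exact eqv_prod _ _ _ fun k _ => (h b k).zpow _


def EqnN (D : QData n) (N : ℕ) (q : Fin n → ℕ → (Rn n)ˣ) : Prop :=
  ∀ (a : Fin n) (m : ℕ), 1 ≤ m →
    eqv N ((q a m).val ^ 2)
      ((q a (m+1)).val * (q a (m-1)).val
        + (X a : Rn n) ^ m * (q a m).val ^ 2 * (PiU D q a m).val)

def StabN (N : ℕ) (q : Fin n → ℕ → (Rn n)ˣ) : Prop :=
  ∀ d, d ≤ N → ∀ (a : Fin n) (m : ℕ), d + 1 ≤ m → eqv d (q a m).val (q a (d+1)).val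

def PropsN (D : QData n) (N : ℕ) (q : Fin n → ℕ → (Rn n)ˣ) : Prop :=
  (∀ a, q a 0 = 1) ∧ (∀ a m, constantCoeff (q a m).val = 1)
    ∧ EqnN D N q ∧ StabN N q

lemma cc_one_sub_X_pow_mul (a : Fin n) {j : ℕ} (hj : 1 ≤ j) (P : Rn n) :
    constantCoeff (1 - (X a : Rn n) ^ j * P) = 1 := by
  rw [map_sub, map_one, map_mul, map_pow, constantCoeff_X, zero_pow (by omega), zero_mul,
    sub_zero]

def Ustep (D : QData n) (q' : Fin n → ℕ → (Rn n)ˣ) (a : Fin n) (j : ℕ) : (Rn n)ˣ :=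
  if hj : 1 ≤ j then
    mkUnit (1 - (X a : Rn n) ^ j * (PiU D q' a j).val) (cc_one_sub_X_pow_mul a hj _)
  else 1

lemma Ustep_val (D : QData n) (q' : Fin n → ℕ → (Rn n)ˣ) (a : Fin n) {j : ℕ} (hj : 1 ≤ j) :
    (Ustep D q' a j).val = 1 - (X a : Rn n) ^ j * (PiU D q' a j).val := by
  rw [Ustep, dif_pos hj, mkUnit_val]

lemma cc_Ustep (D : QData n) (q' : Fin n → ℕ → (Rn n)ˣ) (a : Fin n) (j : ℕ) :
    constantCoeff (Ustep D q' a j).val = 1 := by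
  by_cases hj : 1 ≤ j
  · rw [Ustep_val D q' a hj]; exact cc_one_sub_X_pow_mul a hj _
  · rw [Ustep, dif_neg hj, Units.val_one, map_one]

def q0aux (D : QData n) (q' : Fin n → ℕ → (Rn n)ˣ) (u : Fin n → (Rn n)ˣ) (a : Fin n) :
    ℕ → (Rn n)ˣ × (Rn n)ˣ
  | 0 => (1, u a)
  | j+1 => ((q0aux D q' u a j).2,
      (q0aux D q' u a j).2 ^ 2 * Ustep D q' a (j+1) * ((q0aux D q' u a j).1)⁻¹)

def q0 (D : QData n) (q' : Fin n → ℕ → (Rn n)ˣ) (u : Fin n → (Rn n)ˣ) (a : Fin n) (m : ℕ) :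
    (Rn n)ˣ := (q0aux D q' u a m).1

lemma q0_zero (D : QData n) (q' : Fin n → ℕ → (Rn n)ˣ) (u : Fin n → (Rn n)ˣ) (a : Fin n) :
    q0 D q' u a 0 = 1 := rfl

lemma q0_one (D : QData n) (q' : Fin n → ℕ → (Rn n)ˣ) (u : Fin n → (Rn n)ˣ) (a : Fin n) :
    q0 D q' u a 1 = u a := rfl

lemma q0_rec (D : QData n) (q' : Fin n → ℕ → (Rn n)ˣ) (u : Fin n → (Rn n)ˣ) (a : Fin n)
    (j : ℕ) :
    q0 D q' u a (j+2) * q0 D q' u a j = q0 D q' u a (j+1) ^ 2 * Ustep D q' a (j+1) := by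
  show ((q0aux D q' u a (j+1)).2) * (q0aux D q' u a j).1 = _
  show ((q0aux D q' u a j).2 ^ 2 * Ustep D q' a (j+1) * ((q0aux D q' u a j).1)⁻¹)
    * (q0aux D q' u a j).1 = _
  rw [inv_mul_cancel_right]
  rfl

lemma cc_q0 (D : QData n) (q' : Fin n → ℕ → (Rn n)ˣ) (u : Fin n → (Rn n)ˣ)
    (hu : ∀ a, constantCoeff (u a).val = 1) (a : Fin n) (m : ℕ) :
    constantCoeff (q0 D q' u a m).val = 1 := by
  have key : ∀ m, constantCoeff (q0aux D q' u a m).1.val = 1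
      ∧ constantCoeff (q0aux D q' u a m).2.val = 1 := by
    intro m
    induction m with
    | zero => exact ⟨by simp [q0aux], by simpa [q0aux] using hu a⟩
    | succ j ih =>
        refine ⟨ih.2, ?_⟩
        show constantCoeff
          ((q0aux D q' u a j).2 ^ 2 * Ustep D q' a (j+1) * ((q0aux D q' u a j).1)⁻¹).val = 1
        rw [Units.val_mul, Units.val_mul, Units.val_pow_eq_pow_val, map_mul, map_mul, map_pow,
          ih.2, cc_Ustep, constantCoeff_inv ih.1]
        ring
  exact (key m).1


lemma exists_next (D : QData n) (hd : ∀ a, 0 < D.d a) (N : ℕ) (q' : Fin n → ℕ → (Rn n)ˣ)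
    (hq' : PropsN D N q') :
    ∃ q : Fin n → ℕ → (Rn n)ˣ, PropsN D (N+1) q ∧ ∀ a m, eqv N (q a m).val (q' a m).val := by
  obtain ⟨h0', hcc', hEqn', hStab'⟩ := hq'
  set u : Fin n → (Rn n)ˣ := fun a => q' a 1 with hu
  set p : Fin n → ℕ → (Rn n)ˣ := fun a m => q0 D q' u a m with hp
  have hp0 : ∀ a, p a 0 = 1 := fun a => rfl
  have hp1 : ∀ a, p a 1 = q' a 1 := fun a => rfl
  have hprec : ∀ a j, p a (j+2) * p a j = p a (j+1) ^ 2 * Ustep D q' a (j+1) :=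
    fun a j => q0_rec D q' u a j
  have hpcc : ∀ a m, constantCoeff (p a m).val = 1 :=
    fun a m => cc_q0 D q' u (fun a => hcc' a 1) a m
  have hprecval : ∀ a j, (p a (j+1+1)).val * (p a j).val
      = (p a (j+1)).val ^ 2
        - (X a : Rn n) ^ (j+1) * (p a (j+1)).val ^ 2 * (PiU D q' a (j+1)).val := by
    intro a j
    have h := congrArg Units.val (hprec a j)
    rw [Units.val_mul, Units.val_mul, Units.val_pow_eq_pow_val,
      Ustep_val D q' a (by omega : 1 ≤ j+1)] at h
    rw [h]; ring
  -- p agrees with q' up to degree N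
  have hpq2 : ∀ a m, eqv N (p a m).val (q' a m).val ∧ eqv N (p a (m+1)).val (q' a (m+1)).val := by
    intro a m
    induction m with
    | zero =>
        constructor
        · rw [hp0 a, h0' a]; exact eqv_refl _
        · rw [hp1 a]; exact eqv_refl _
    | succ j ih =>
        refine ⟨ih.2, ?_⟩
        have hEq := hEqn' a (j+1) (by omega)
        simp only [Nat.add_sub_cancel] at hEq
        have e2 : eqv N
            ((q' a (j+1)).val ^ 2
              - (X a : Rn n) ^ (j+1) * (q' a (j+1)).val ^ 2 * (PiU D q' a (j+1)).val)
            ((q' a (j+1+1)).val * (q' a j).val) := by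
          have h3 := hEq.sub
            (eqv_refl ((X a : Rn n) ^ (j+1) * (q' a (j+1)).val ^ 2 * (PiU D q' a (j+1)).val))
          rw [add_sub_cancel_right] at h3
          exact h3
        have e1 : eqv N ((p a (j+1+1)).val * (p a j).val)
            ((q' a (j+1)).val ^ 2
              - (X a : Rn n) ^ (j+1) * (q' a (j+1)).val ^ 2 * (PiU D q' a (j+1)).val) := by
          rw [hprecval a j]
          exact (ih.2.pow 2).sub (((eqv_refl _).mul (ih.2.pow 2)).mul (eqv_refl _))
        exact eqv_cancel ih.1 (e1.trans e2)
  have hpq : ∀ a m, eqv N (p a m).val (q' a m).val := fun a m => (hpq2 a m).1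
  -- the correction unit
  set ρ : Fin n → (Rn n)ˣ := fun a => p a (N+2) * (p a (N+1))⁻¹ with hρdef
  have hρ : ∀ a, eqv N (ρ a).val 1 := by
    intro a
    have h1 : eqv N (p a (N+2)).val (p a (N+1)).val :=
      ((hpq a (N+2)).trans (hStab' N le_rfl a (N+2) (by omega))).trans (hpq a (N+1)).symm
    have := eqv_mul_inv_one h1
    exact this
  have hρinv : ∀ a, eqv N (((ρ a)⁻¹ : (Rn n)ˣ) : Rn n) 1 := by
    intro a
    have := (hρ a).inv (v := 1)
    simpa using this
  have hccρ : ∀ a, constantCoeff (ρ a).val = 1 := by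
    intro a
    rw [hρdef]
    show constantCoeff ((p a (N+2)) * (p a (N+1))⁻¹).val = 1
    rw [Units.val_mul, map_mul, hpcc, constantCoeff_inv (hpcc a (N+1)), one_mul]
  have hccρinv : ∀ a, constantCoeff (((ρ a)⁻¹ : (Rn n)ˣ) : Rn n) = 1 :=
    fun a => constantCoeff_inv (hccρ a)
  -- the corrected family
  set q : Fin n → ℕ → (Rn n)ˣ := fun a m => p a m * ((ρ a)⁻¹) ^ m with hqdef
  have hq0 : ∀ a, q a 0 = 1 := by
    intro a
    show p a 0 * ((ρ a)⁻¹) ^ 0 = 1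
    rw [hp0, pow_zero, mul_one]
  have hqcc : ∀ a m, constantCoeff (q a m).val = 1 := by
    intro a m
    show constantCoeff (p a m * ((ρ a)⁻¹) ^ m).val = 1
    rw [Units.val_mul, map_mul, hpcc, Units.val_pow_eq_pow_val, map_pow, hccρinv, one_pow,
      one_mul]
  have hqrec : ∀ a j, q a (j+2) * q a j = q a (j+1) ^ 2 * Ustep D q' a (j+1) := by
    intro a j
    show (p a (j+2) * ((ρ a)⁻¹) ^ (j+2)) * (p a j * ((ρ a)⁻¹) ^ j)
      = (p a (j+1) * ((ρ a)⁻¹) ^ (j+1)) ^ 2 * Ustep D q' a (j+1)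
    have hx : ((ρ a)⁻¹) ^ (j+2) * ((ρ a)⁻¹) ^ j = (((ρ a)⁻¹) ^ (j+1)) ^ 2 := by
      rw [← pow_add, ← pow_mul]
      congr 1
      omega
    calc (p a (j+2) * ((ρ a)⁻¹) ^ (j+2)) * (p a j * ((ρ a)⁻¹) ^ j)
        = (p a (j+2) * p a j) * (((ρ a)⁻¹) ^ (j+2) * ((ρ a)⁻¹) ^ j) := by
          rw [mul_mul_mul_comm]
      _ = (p a (j+1) ^ 2 * Ustep D q' a (j+1)) * (((ρ a)⁻¹) ^ (j+1)) ^ 2 := by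
          rw [hprec, hx]
      _ = _ := by rw [mul_pow, mul_right_comm]
  have hq_eq : ∀ a, q a (N+2) = q a (N+1) := by
    intro a
    show p a (N+2) * ((ρ a)⁻¹) ^ (N+2) = p a (N+1) * ((ρ a)⁻¹) ^ (N+1)
    have key : p a (N+2) * (ρ a)⁻¹ = p a (N+1) := by
      rw [hρdef]
      show p a (N+2) * (p a (N+2) * (p a (N+1))⁻¹)⁻¹ = p a (N+1)
      rw [mul_inv_rev, inv_inv, ← mul_assoc, mul_comm (p a (N+2)) (p a (N+1)), mul_inv_cancel_right]
    calc p a (N+2) * ((ρ a)⁻¹) ^ (N+2)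
        = (p a (N+2) * (ρ a)⁻¹) * ((ρ a)⁻¹) ^ (N+1) := by
          rw [pow_succ, ← mul_assoc, mul_right_comm]
      _ = p a (N+1) * ((ρ a)⁻¹) ^ (N+1) := by rw [key]
  have hqq' : ∀ a m, eqv N (q a m).val (q' a m).val := by
    intro a m
    show eqv N (p a m * ((ρ a)⁻¹) ^ m).val (q' a m).val
    rw [Units.val_mul, Units.val_pow_eq_pow_val]
    have h2 : eqv N ((((ρ a)⁻¹ : (Rn n)ˣ) : Rn n) ^ m) 1 := by
      have := (hρinv a).pow m
      rwa [one_pow] at this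
    have := (hpq a m).mul h2
    rwa [mul_one] at this
  -- the equations hold mod N+1
  clear_value q
  have hqrecval : ∀ a j, (q a (j+2)).val * (q a j).val
      = (q a (j+1)).val ^ 2
        - (X a : Rn n) ^ (j+1) * (q a (j+1)).val ^ 2 * (PiU D q' a (j+1)).val := by
    intro a j
    have h := congrArg Units.val (hqrec a j)
    rw [Units.val_mul, Units.val_mul, Units.val_pow_eq_pow_val,
      Ustep_val D q' a (by omega : 1 ≤ j+1)] at h
    rw [h]; ring
  have hEqn : EqnN D (N+1) q := by
    intro a m hm
    obtain ⟨j, rfl⟩ : ∃ j, m = j + 1 := ⟨m - 1, by omega⟩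
    show eqv (N+1) ((q a (j+1)).val ^ 2)
      ((q a (j+2)).val * (q a j).val
        + (X a : Rn n) ^ (j+1) * (q a (j+1)).val ^ 2 * (PiU D q a (j+1)).val)
    have hPi : eqv N (PiU D q a (j+1)).val (PiU D q' a (j+1)).val :=
      PiU_congr D hd hqq' a (by omega)
    have hdiff : (q a (j+1)).val ^ 2
        - ((q a (j+2)).val * (q a j).val
          + (X a : Rn n) ^ (j+1) * (q a (j+1)).val ^ 2 * (PiU D q a (j+1)).val)
        = (X a : Rn n) ^ (j+1)
          * ((q a (j+1)).val ^ 2 * ((PiU D q' a (j+1)).val - (PiU D q a (j+1)).val)) := by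
      rw [hqrecval a j]; ring
    show _ ∈ J n (N+1)
    rw [hdiff]
    exact X_pow_mul_mem (by omega) a (Ideal.mul_mem_left _ _ hPi.symm)
  -- stabilization
  have hStab : StabN (N+1) q := by
    intro d hdN a m hdm
    by_cases hcase : d ≤ N
    · exact (((hqq' a m).mono hcase).trans (hStab' d hcase a m hdm)).trans
        (((hqq' a (d+1)).mono hcase).symm)
    · have hdN1 : d = N + 1 := by omega
      subst hdN1
      have hC : ∀ j, eqv (N+1) (q a (N+1+j)).val (q a (N+1)).val
          ∧ eqv (N+1) (q a (N+2+j)).val (q a (N+1)).val := by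
        intro j
        induction j with
        | zero =>
            refine ⟨eqv_refl _, ?_⟩
            rw [show N+2+0 = N+2 from rfl, hq_eq a]
            exact eqv_refl _
        | succ i ih =>
            constructor
            · have e : N+1+(i+1) = N+2+i := by omega
              rw [e]
              exact ih.2
            · -- goal : eqv (N+1) (q a (N+2+(i+1))).val (q a (N+1)).val
              have hU1 : eqv (N+1) (Ustep D q' a (N+2+i)).val 1 := by
                rw [Ustep_val D q' a (by omega)]
                show (1 - (X a : Rn n) ^ (N+2+i) * (PiU D q' a (N+2+i)).val) - 1 ∈ J n (N+1)
                have : (1 - (X a : Rn n) ^ (N+2+i) * (PiU D q' a (N+2+i)).val) - 1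
                    = -((X a : Rn n) ^ (N+2+i) * (PiU D q' a (N+2+i)).val) := by ring
                rw [this]
                exact (J n (N+1)).neg_mem (X_pow_mul_mem_big (by omega) a _)
              have hrec := congrArg Units.val (hqrec a (N+1+i))
              rw [Units.val_mul, Units.val_mul, Units.val_pow_eq_pow_val] at hrec
              have hL : eqv (N+1) ((q a (N+1+i+2)).val * (q a (N+1+i)).val)
                  ((q a (N+1)).val * (q a (N+1)).val) := by
                rw [hrec]
                have h1 : eqv (N+1) ((q a (N+1+i+1)).val ^ 2 * (Ustep D q' a (N+1+i+1)).val)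
                    ((q a (N+1)).val ^ 2 * 1) := by
                  have e : N+1+i+1 = N+2+i := by omega
                  rw [e]
                  exact (ih.2.pow 2).mul hU1
                have h2 : (q a (N+1)).val ^ 2 * 1 = (q a (N+1)).val * (q a (N+1)).val := by
                  ring
                rw [h2] at h1
                exact h1
              have := eqv_cancel ih.1 hL
              have e : N+1+i+2 = N+2+(i+1) := by omega
              rwa [e] at this
      obtain ⟨j, rfl⟩ : ∃ j, m = N+2+j := ⟨m - (N+2), by omega⟩
      rw [hq_eq a]
      exact (hC j).2
  exact ⟨q, ⟨hq0, hqcc, hEqn, hStab⟩, hqq'⟩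


lemma eqv_zero_of_cc {f g : Rn n}
    (h : constantCoeff f = constantCoeff g) : eqv 0 f g := by
  rw [eqv_def]
  intro s hs
  have hs0 : s = 0 := degm_eq_zero (by omega)
  subst hs0
  simpa [coeff_zero_eq_constantCoeff] using h

lemma props_zero (D : QData n) : PropsN D 0 (fun _ _ => (1 : (Rn n)ˣ)) := by
  refine ⟨fun a => rfl, fun a m => by simp, ?_, ?_⟩
  · intro a m hm
    apply eqv_zero_of_cc
    simp [map_add, map_mul, map_pow, constantCoeff_X, zero_pow (by omega : m ≠ 0)]
  · intro d hd a m hdm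
    have : d = 0 := by omega
    subst this
    exact eqv_zero_of_cc (by simp)

def lsolAux (D : QData n) (hd : ∀ a, 0 < D.d a) :
    (N : ℕ) → {q : Fin n → ℕ → (Rn n)ˣ // PropsN D N q}
  | 0 => ⟨fun _ _ => 1, props_zero D⟩
  | N+1 => ⟨(exists_next D hd N (lsolAux D hd N).1 (lsolAux D hd N).2).choose,
      (exists_next D hd N (lsolAux D hd N).1 (lsolAux D hd N).2).choose_spec.1⟩

lemma lsolAux_compat (D : QData n) (hd : ∀ a, 0 < D.d a) (N : ℕ) :
    ∀ a m, eqv N ((lsolAux D hd (N+1)).1 a m).val ((lsolAux D hd N).1 a m).val :=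
  (exists_next D hd N (lsolAux D hd N).1 (lsolAux D hd N).2).choose_spec.2

lemma lsol_coh (D : QData n) (hd : ∀ a, 0 < D.d a) :
    ∀ N d, d ≤ N → ∀ a m,
      eqv d ((lsolAux D hd N).1 a m).val ((lsolAux D hd d).1 a m).val := by
  intro N
  induction N with
  | zero =>
      intro d hdN a m
      have : d = 0 := by omega
      subst this
      exact eqv_refl _
  | succ K ih =>
      intro d hdN a m
      rcases Nat.eq_or_lt_of_le hdN with h|h
      · subst h
        exact eqv_refl _
      · exact ((lsolAux_compat D hd K a m).mono (by omega)).trans (ih d (by omega) a m)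

def Qser (D : QData n) (hd : ∀ a, 0 < D.d a) (a : Fin n) (m : ℕ) : Rn n :=
  fun s => coeff s ((lsolAux D hd (degm s)).1 a m).val

lemma coeff_Qser (D : QData n) (hd : ∀ a, 0 < D.d a) (a : Fin n) (m : ℕ) (s : Fin n →₀ ℕ) :
    coeff s (Qser D hd a m) = coeff s ((lsolAux D hd (degm s)).1 a m).val := rfl

lemma Qser_eqv (D : QData n) (hd : ∀ a, 0 < D.d a) (N : ℕ) (a : Fin n) (m : ℕ) :
    eqv N (Qser D hd a m) ((lsolAux D hd N).1 a m).val := by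
  rw [eqv_def]
  intro s hs
  rw [coeff_Qser]
  exact (eqv_def.1 (lsol_coh D hd N (degm s) hs a m) s le_rfl).symm

lemma cc_Qser (D : QData n) (hd : ∀ a, 0 < D.d a) (a : Fin n) (m : ℕ) :
    constantCoeff (Qser D hd a m) = 1 := by
  rw [← coeff_zero_eq_constantCoeff_apply, coeff_Qser, degm_zero,
    coeff_zero_eq_constantCoeff_apply]
  exact (lsolAux D hd 0).2.2.1 a m

lemma exists_canonical (D : QData n) (hd : ∀ a, 0 < D.d a) :
    ∃ Q : Fin n → ℕ → (Rn n)ˣ, IsQSysSol D Q ∧ IsCanonical Q := by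
  set Q : Fin n → ℕ → (Rn n)ˣ := fun a m => mkUnit (Qser D hd a m) (cc_Qser D hd a m)
    with hQdef
  have hQval : ∀ a m, (Q a m).val = Qser D hd a m := fun a m => rfl
  have hQL : ∀ N b k, eqv N (Q b k).val ((lsolAux D hd N).1 b k).val := by
    intro N b k
    rw [hQval]
    exact Qser_eqv D hd N b k
  refine ⟨Q, ⟨?_, ?_, ?_⟩, ?_⟩
  · -- Q a 0 = 1
    intro a
    apply Units.ext
    rw [hQval, Units.val_one]
    apply eqv_all_eq
    intro N
    have h := (lsolAux D hd N).2.1 a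
    have := Qser_eqv D hd N a 0
    rw [h, Units.val_one] at this
    exact this
  · intro a m
    rw [hQval]
    exact cc_Qser D hd a m
  · intro a m hm
    apply eqv_all_eq
    intro N
    show eqv N ((Q a m).val ^ 2)
      ((Q a (m+1)).val * (Q a (m-1)).val
        + (X a : Rn n) ^ m * (Q a m).val ^ 2 * (PiU D Q a m).val)
    have e1 : eqv N ((Q a m).val ^ 2) (((lsolAux D hd N).1 a m).val ^ 2) :=
      (hQL N a m).pow 2
    have e2 := (lsolAux D hd N).2.2.2.1 a m hm
    have e3 : eqv N
        ((Q a (m+1)).val * (Q a (m-1)).val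
          + (X a : Rn n) ^ m * (Q a m).val ^ 2 * (PiU D Q a m).val)
        (((lsolAux D hd N).1 a (m+1)).val * ((lsolAux D hd N).1 a (m-1)).val
          + (X a : Rn n) ^ m * ((lsolAux D hd N).1 a m).val ^ 2
            * (PiU D (lsolAux D hd N).1 a m).val) :=
      ((hQL N a (m+1)).mul (hQL N a (m-1))).add
        (((eqv_refl _).mul ((hQL N a m).pow 2)).mul (PiU_congr D hd (hQL N) a hm))
    exact (e1.trans e2).trans e3.symm
  · intro a s
    refine ⟨coeff s ((lsolAux D hd (degm s)).1 a (degm s + 1)).val, degm s + 1, ?_⟩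
    intro m hm
    rw [hQval, coeff_Qser]
    exact eqv_def.1 ((lsolAux D hd (degm s)).2.2.2.2 (degm s) le_rfl a m hm) s le_rfl


lemma unit_pow_eqv {N : ℕ} (u : (Rn n)ˣ) (hε : u.val - 1 ∈ J n N) (m : ℕ) :
    eqv (N+1) (u.val ^ m) (1 + m • (u.val - 1)) := by
  induction m with
  | zero => rw [pow_zero, zero_smul, add_zero]; exact eqv_refl 1
  | succ k ih =>
      have e : eqv (N+1) u.val (1 + (u.val - 1)) := by
        have hu : u.val = 1 + (u.val - 1) := by ring
        rw [← hu]
        exact eqv_refl _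
      have h1 : eqv (N+1) (u.val ^ k * u.val) ((1 + k • (u.val - 1)) * (1 + (u.val - 1))) :=
        ih.mul e
      have h2 : eqv (N+1) ((1 + k • (u.val - 1)) * (1 + (u.val - 1)))
          (1 + (k+1) • (u.val - 1)) := by
        show _ ∈ J n (N+1)
        have hid : (1 + k • (u.val - 1)) * (1 + (u.val - 1)) - (1 + (k+1) • (u.val - 1))
            = (k • (u.val - 1)) * (u.val - 1) := by
          simp only [nsmul_eq_mul]
          push_cast
          ring
        rw [hid]
        exact mul_mem_J_succ (by omega) (nsmul_mem hε k) hε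
      rw [pow_succ]
      exact h1.trans h2

lemma coeff_mul_of_mem_J {N : ℕ} {f ε : Rn n} (hf : constantCoeff f = 1)
    (hε : ε ∈ J n N) {s : Fin n →₀ ℕ} (hs : degm s ≤ N + 1) :
    coeff s (f * ε) = coeff s ε := by
  classical
  rw [coeff_mul]
  rw [Finset.sum_eq_single ((0 : Fin n →₀ ℕ), s)]
  · rw [coeff_zero_eq_constantCoeff_apply, hf, one_mul]
  · intro p hp hne
    rw [Finset.HasAntidiagonal.mem_antidiagonal] at hp
    by_cases h1 : degm p.2 ≤ N
    · rw [hε _ h1, mul_zero]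
    · have hadd : degm p.1 + degm p.2 = degm s := by rw [← degm_add, hp]
      have hp1 : p.1 = 0 := degm_eq_zero (by omega)
      have hp2 : p.2 = s := by rw [← hp, hp1, zero_add]
      exact absurd (Prod.ext hp1 hp2) hne
  · intro h
    exact absurd (Finset.HasAntidiagonal.mem_antidiagonal.2 (zero_add s)) h

lemma unique_canonical (D : QData n) (hd : ∀ a, 0 < D.d a)
    {Q Q' : Fin n → ℕ → (Rn n)ˣ} (hQ : IsQSysSol D Q) (hQcan : IsCanonical Q)
    (hQ' : IsQSysSol D Q') (hQcan' : IsCanonical Q') : Q = Q' := by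
  obtain ⟨h0, hcc, heqn⟩ := hQ
  obtain ⟨h0', hcc', heqn'⟩ := hQ'
  have heqnP : ∀ (a : Fin n) (m : ℕ), 1 ≤ m → (Q a m).val ^ 2
      = (Q a (m+1)).val * (Q a (m-1)).val
        + (X a : Rn n) ^ m * (Q a m).val ^ 2 * (PiU D Q a m).val := heqn
  have heqnP' : ∀ (a : Fin n) (m : ℕ), 1 ≤ m → (Q' a m).val ^ 2
      = (Q' a (m+1)).val * (Q' a (m-1)).val
        + (X a : Rn n) ^ m * (Q' a m).val ^ 2 * (PiU D Q' a m).val := heqn'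
  have main : ∀ N a m, eqv N (Q a m).val (Q' a m).val := by
    intro N
    induction N with
    | zero =>
        intro a m
        exact eqv_zero_of_cc (by rw [hcc, hcc'])
    | succ N ih =>
        intro a m
        -- the ratio unit for this `a`
        set u : (Rn n)ˣ := (Q a 1)⁻¹ * Q' a 1 with hudef
        set w : Rn n := u.val with hwdef
        have hQ1u : (Q' a 1).val = (Q a 1).val * w := by
          rw [hwdef, hudef, Units.val_mul, ← mul_assoc, Units.mul_inv, one_mul]
        have hεJ : w - 1 ∈ J n N := by
          have h1 : eqv N (Q' a 1).val (Q a 1).val := (ih a 1).symm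
          have h2 := eqv_mul_inv_one (w := Q' a 1) (w' := Q a 1) h1
          have h3 : (Q' a 1 * (Q a 1)⁻¹ : (Rn n)ˣ) = u := by
            rw [hudef, mul_comm]
          rw [h3] at h2
          exact h2
        set ε : Rn n := w - 1 with hεdef
        -- Q' a k ≡ Q a k * w^k  mod N+1
        have C2 : ∀ k, eqv (N+1) (Q' a k).val ((Q a k).val * w ^ k)
            ∧ eqv (N+1) (Q' a (k+1)).val ((Q a (k+1)).val * w ^ (k+1)) := by
          intro k
          induction k with
          | zero =>
              constructor
              · rw [h0', h0, pow_zero, mul_one]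
                exact eqv_refl _
              · rw [hQ1u, pow_one]
                exact eqv_refl _
          | succ j ihC =>
              refine ⟨ihC.2, ?_⟩
              have hv : (Q a (j+1+1)).val * (Q a j).val
                  = (Q a (j+1)).val ^ 2
                    - (X a : Rn n) ^ (j+1) * (Q a (j+1)).val ^ 2 * (PiU D Q a (j+1)).val := by
                have h : (Q a (j+1)).val ^ 2
                    = (Q a (j+1+1)).val * (Q a j).val
                      + (X a : Rn n) ^ (j+1) * (Q a (j+1)).val ^ 2
                        * (PiU D Q a (j+1)).val := heqnP a (j+1) (by omega)
                linear_combination -h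
              have hv' : (Q' a (j+1+1)).val * (Q' a j).val
                  = (Q' a (j+1)).val ^ 2
                    - (X a : Rn n) ^ (j+1) * (Q' a (j+1)).val ^ 2
                      * (PiU D Q' a (j+1)).val := by
                have h : (Q' a (j+1)).val ^ 2
                    = (Q' a (j+1+1)).val * (Q' a j).val
                      + (X a : Rn n) ^ (j+1) * (Q' a (j+1)).val ^ 2
                        * (PiU D Q' a (j+1)).val := heqnP' a (j+1) (by omega)
                linear_combination -h
              -- middle congruence
              have hX : eqv (N+1)
                  ((X a : Rn n) ^ (j+1) * ((Q' a (j+1)).val ^ 2 * (PiU D Q' a (j+1)).val))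
                  ((X a : Rn n) ^ (j+1)
                    * (((Q a (j+1)).val * w ^ (j+1)) ^ 2 * (PiU D Q a (j+1)).val)) := by
                show _ ∈ J n (N+1)
                have hmem : (Q' a (j+1)).val ^ 2 * (PiU D Q' a (j+1)).val
                    - ((Q a (j+1)).val * w ^ (j+1)) ^ 2 * (PiU D Q a (j+1)).val ∈ J n N := by
                  have hin : eqv N ((Q' a (j+1)).val ^ 2 * (PiU D Q' a (j+1)).val)
                      (((Q a (j+1)).val * w ^ (j+1)) ^ 2 * (PiU D Q a (j+1)).val) :=
                    ((ihC.2.mono (by omega)).pow 2).mul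
                      (PiU_congr D hd (fun b k => (ih b k).symm) a (by omega))
                  exact hin
                have hre : (X a : Rn n) ^ (j+1)
                      * ((Q' a (j+1)).val ^ 2 * (PiU D Q' a (j+1)).val)
                    - (X a : Rn n) ^ (j+1)
                      * (((Q a (j+1)).val * w ^ (j+1)) ^ 2 * (PiU D Q a (j+1)).val)
                    = (X a : Rn n) ^ (j+1)
                      * ((Q' a (j+1)).val ^ 2 * (PiU D Q' a (j+1)).val
                        - ((Q a (j+1)).val * w ^ (j+1)) ^ 2 * (PiU D Q a (j+1)).val) := by
                  ring
                rw [hre]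
                exact X_pow_mul_mem (by omega) a hmem
              have hB : eqv (N+1) ((Q' a (j+1+1)).val * (Q' a j).val)
                  (((Q a (j+1)).val * w ^ (j+1)) ^ 2
                    - (X a : Rn n) ^ (j+1) * ((Q a (j+1)).val * w ^ (j+1)) ^ 2
                      * (PiU D Q a (j+1)).val) := by
                rw [hv']
                refine (eqv.sub ((ihC.2.pow 2)) ?_)
                have h1 := hX
                have e1 : (X a : Rn n) ^ (j+1) * (Q' a (j+1)).val ^ 2 * (PiU D Q' a (j+1)).val
                    = (X a : Rn n) ^ (j+1)
                      * ((Q' a (j+1)).val ^ 2 * (PiU D Q' a (j+1)).val) := by ring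
                have e2 : (X a : Rn n) ^ (j+1) * ((Q a (j+1)).val * w ^ (j+1)) ^ 2
                      * (PiU D Q a (j+1)).val
                    = (X a : Rn n) ^ (j+1)
                      * (((Q a (j+1)).val * w ^ (j+1)) ^ 2 * (PiU D Q a (j+1)).val) := by ring
                rw [e1, e2]
                exact h1
              have hT : ((Q a (j+1+1)).val * w ^ (j+1+1)) * ((Q a j).val * w ^ j)
                  = ((Q a (j+1)).val * w ^ (j+1)) ^ 2
                    - (X a : Rn n) ^ (j+1) * ((Q a (j+1)).val * w ^ (j+1)) ^ 2
                      * (PiU D Q a (j+1)).val := by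
                have : ((Q a (j+1+1)).val * w ^ (j+1+1)) * ((Q a j).val * w ^ j)
                    = ((Q a (j+1+1)).val * (Q a j).val) * w ^ (2*j+2) := by ring
                rw [this, hv]
                ring
              rw [← hT] at hB
              have hval : (Q a j * u ^ j).val = (Q a j).val * w ^ j := by
                rw [Units.val_mul, Units.val_pow_eq_pow_val, hwdef]
              rw [← hval] at hB
              have hW' : eqv (N+1) (Q' a j).val ((Q a j * u ^ j).val) := by
                rw [hval]
                exact ihC.1
              have hfin := eqv_cancel (w := Q' a j) (w' := Q a j * u ^ j) hW' hB
              exact hfin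
        have C : ∀ k, eqv (N+1) (Q' a k).val ((Q a k).val * w ^ k) := fun k => (C2 k).1
        -- canonicity forces the correction to vanish one degree higher
        have hcoeff : ∀ (s : Fin n →₀ ℕ), degm s ≤ N + 1 → ∀ k,
            coeff s (Q' a k).val = coeff s (Q a k).val + k * coeff s ε := by
          intro s hs k
          have h1 : eqv (N+1) (Q' a k).val ((Q a k).val * (1 + k • ε)) := by
            refine (C k).trans ((eqv_refl (Q a k).val).mul ?_)
            rw [hεdef]
            exact unit_pow_eqv u hεJ k
          have h2 : (Q a k).val * (1 + k • ε) = (Q a k).val + k • ((Q a k).val * ε) := by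
            simp only [nsmul_eq_mul]
            ring
          rw [h2] at h1
          have h3 := eqv_def.1 h1 s hs
          rw [map_add, map_nsmul] at h3
          rw [h3, coeff_mul_of_mem_J (hcc a k) hεJ hs, nsmul_eq_mul]
        have hεJ1 : ε ∈ J n (N+1) := by
          intro s hs
          obtain ⟨c, M0, hM⟩ := hQcan a s
          obtain ⟨c', M0', hM'⟩ := hQcan' a s
          set k := max M0 M0' with hk
          have e1 := hcoeff s hs k
          have e2 := hcoeff s hs (k+1)
          rw [hM k (le_max_left _ _), hM' k (le_max_right _ _)] at e1
          rw [hM (k+1) (by omega), hM' (k+1) (by omega)] at e2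
          have : ((k : ℂ) + 1) * coeff s ε = (k : ℂ) * coeff s ε := by
            push_cast at e1 e2 ⊢
            linear_combination e1 - e2
          linear_combination this
        -- conclude at level N+1
        have hu1 : eqv (N+1) w 1 := hεJ1
        have hw1 : eqv (N+1) (w ^ m) 1 := by
          have := hu1.pow m
          rwa [one_pow] at this
        have := (C m).trans ((eqv_refl (Q a m).val).mul hw1)
        rw [mul_one] at this
        exact this.symm
  funext a m
  apply Units.ext
  apply eqv_all_eq
  intro N
  exact main N a m

end QProof

/-- **Theorem 3.3** ([KNT], cited as Theorem `th:moohantai`, first part): there exists a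
unique canonical solution of the `Q`-system (3.2) for `U_q(X^{(r)}_N)`. -/
theorem exists_unique_canonical_QSol {n : ℕ} (hn : 0 < n) (D : QData n)
    -- positivity of the structure constants
    (hd : ∀ a, 0 < D.d a) (hd' : ∀ a, 0 < D.d' a) (he : ∀ a, 0 < D.eps a)
    (he' : ∀ a, 0 < D.eps' a) (hk0 : 0 < D.k0)
    -- (d_a) is a coprime symmetrizer of the Cartan matrix A of g₀
    (hcop : (Finset.univ : Finset (Fin n)).gcd D.d = 1)
    (hsym : ∀ a b, (D.d a : ℤ) * D.CA a b = (D.d b : ℤ) * D.CA b a)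
    -- κ₀ ε'_a d'_a = ε_a d_a
    (hkap : ∀ a, D.k0 * D.eps' a * D.d' a = D.eps a * D.d a)
    -- integrality assumptions (valid for every X^{(r)}_N)
    (hint1 : ∀ a b : Fin n, ∀ m k : ℕ,
      ((D.eps b * D.d' a : ℕ) : ℤ) ∣ D.CA b a * (min (D.d' a * m) (D.d' b * k) : ℤ))
    (hint2 : ∀ a b : Fin n, ∀ m k : ℕ,
      ((D.eps a * D.d' b : ℕ) : ℤ) ∣ D.CA a b * (min (D.d' a * m) (D.d' b * k) : ℤ))
    -- r is the order of the diagram automorphism; r = 1 is the nontwisted case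
    (hr : D.r = 1 ∨ D.r = 2 ∨ D.r = 3)
    (hnontw : D.r = 1 → D.k0 = 1 ∧ (∀ a, D.eps a = 1 ∧ D.eps' a = 1) ∧ D.d' = D.d) :
    ∃! Q : Fin n → ℕ → (MvPowerSeries (Fin n) ℂ)ˣ, IsQSysSol D Q ∧ IsCanonical Q := by
  obtain ⟨Q, hQ⟩ := QProof.exists_canonical D hd
  refine ⟨Q, hQ, ?_⟩
  intro Q' hQ'
  exact QProof.unique_canonical D hd hQ'.1 hQ'.2 hQ.1 hQ.2

end
end

section
/- For all ν, N ∈ 𝒩, the rational number R(ν,N) is an integer. -/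
open Finset

noncomputable section

/-- An element of `𝒩`: a finitely supported family of nonnegative integers
indexed by pairs `(a, m)` (color `a`, string length `m`). -/
abbrev Fam (n : ℕ) := (Fin n × ℕ) →₀ ℕ

/-- `γ^{(a)}_m(ν) = Σ_{k ≥ 1} min(m,k) ν^{(a)}_k`. -/
def gam {n : ℕ} (ν : Fam n) (a : Fin n) (m : ℕ) : ℤ :=
  ν.sum fun p c => if p.1 = a then (min m p.2 : ℤ) * c else 0

/-- `P^{(a)}_m(ν,N) = γ^{(a)}_m(ν) − Σ_{(b,k)} (A_{ab}/(ε_a d'_b)) min(d'_a m, d'_b k) N^{(b)}_k`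
(an integer, by the integrality assumption; we use exact integer division). -/
def Pz {n : ℕ} (D : QData n) (ν N : Fam n) (a : Fin n) (m : ℕ) : ℤ :=
  gam ν a m - ∑ p ∈ N.support,
    D.CA a p.1 * (min (D.d' a * m) (D.d' p.1 * p.2) : ℤ) / ((D.eps a * D.d' p.1 : ℕ) : ℤ) * N p

/-- `P̂^{(a)}_m(ν,N) = γ^{(a)}_m(ν) − Σ_{(b,k)} (A'_{ab}/d'_b) min(d'_a m, d'_b k) N^{(b)}_k`. -/
def Phz {n : ℕ} (D : QData n) (ν N : Fam n) (a : Fin n) (m : ℕ) : ℤ :=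
  gam ν a m - ∑ p ∈ N.support,
    D.CA' a p.1 * (min (D.d' a * m) (D.d' p.1 * p.2) : ℤ) / ((D.d' p.1 : ℕ) : ℤ) * N p

/-- `F_{am,bk} = δ_{ab} δ_{mk} P^{(a)}_m + (A_{ba}/(ε_b d'_a)) min(d'_a m, d'_b k) N^{(b)}_k`,
where `p = (a,m)`, `q = (b,k)`. -/
def Fmat {n : ℕ} (D : QData n) (ν N : Fam n) (p q : Fin n × ℕ) : ℤ :=
  (if p = q then Pz D ν N p.1 p.2 else 0)
  + D.CA q.1 p.1 * (min (D.d' p.1 * p.2) (D.d' q.1 * q.2) : ℤ) / ((D.eps q.1 * D.d' p.1 : ℕ) : ℤ) * N q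

/-- The generalized binomial coefficient `C(x,j) = x(x−1)⋯(x−j+1)/j!`. -/
def genBinom (x : ℚ) (j : ℕ) : ℚ := (∏ i ∈ Finset.range j, (x - i)) / (Nat.factorial j)

/-- The number `R(ν,N)` of (2.17): `R(ν,0) = 1` and for `N ≠ 0`,
`R(ν,N) = det_{H'} F · ∏_{(a,m)∈H'} (1/N^{(a)}_m) C(P^{(a)}_m+N^{(a)}_m−1, N^{(a)}_m−1)`. -/
def Rnum {n : ℕ} (D : QData n) (ν N : Fam n) : ℚ :=
  if N = 0 then 1 else
    (Matrix.det (Matrix.of fun p q : N.support => (Fmat D ν N p.1 q.1 : ℚ)))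
    * ∏ p ∈ N.support, (N p : ℚ)⁻¹ * genBinom ((Pz D ν N p.1 p.2 : ℚ) + N p - 1) (N p - 1)


-- auxiliary lemmas
open Polynomial in
private lemma descPoch_eval_prod (x : ℚ) (j : ℕ) :
    (descPochhammer ℚ j).eval x = ∏ i ∈ Finset.range j, (x - i) := by
  induction j with
  | zero => simp
  | succ m ih =>
      rw [descPochhammer_succ_right, Polynomial.eval_mul, ih, Finset.prod_range_succ]
      simp

private lemma intDescPoch (x : ℤ) (j : ℕ) :
    (descPochhammer ℤ j).eval x = (j.factorial : ℤ) * Ring.choose x j := by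
  have := Ring.descPochhammer_eq_factorial_smul_choose (R := ℤ) x j
  rw [← Polynomial.eval_eq_smeval, nsmul_eq_mul] at this
  exact_mod_cast this

private lemma genBinom_intCast (x : ℤ) (j : ℕ) :
    genBinom (x : ℚ) j = ((Ring.choose x j : ℤ) : ℚ) := by
  have h2 : (∏ i ∈ Finset.range j, ((x : ℚ) - i)) = (((descPochhammer ℤ j).eval x : ℤ) : ℚ) := by
    rw [← descPoch_eval_prod, ← descPochhammer_map (Int.castRingHom ℚ) j,
      Polynomial.eval_intCast_map]
    rfl
  have hf : ((j.factorial : ℚ)) ≠ 0 := by exact_mod_cast (Nat.factorial_ne_zero j)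
  unfold genBinom
  rw [h2, intDescPoch]
  push_cast
  field_simp

private lemma choose_key (P : ℤ) (m : ℕ) :
    ((m : ℤ) + 1) * Ring.choose (P + m) (m + 1) = P * Ring.choose (P + m) m := by
  have hf : ((m.factorial : ℤ)) ≠ 0 := by exact_mod_cast (Nat.factorial_ne_zero m)
  apply mul_left_cancel₀ hf
  have h1 : (descPochhammer ℤ (m+1)).eval (P + m)
      = (descPochhammer ℤ m).eval (P + m) * P := by
    rw [descPochhammer_succ_right, Polynomial.eval_mul]
    congr 1
    simp
  have h2 := intDescPoch (P + m) (m + 1)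
  have h3 := intDescPoch (P + m) m
  rw [h1, h3] at h2
  rw [Nat.factorial_succ] at h2
  push_cast at h2 ⊢
  nlinarith [h2]

open Matrix in
private lemma det_aux {ι R : Type*} [Fintype ι] [DecidableEq ι] [CommRing R]
    (P Nv c b : ι → R) (g : ι → ι → R) (h : ∀ i, Nv i * b i = P i * c i) :
    (∏ i, Nv i) ∣
      (Matrix.det (Matrix.of fun p q => (if p = q then P p else 0) + g p q * Nv q)) * ∏ i, c i := by
  classical
  set E : ι → ι → R := fun q p => if p = q then (1:R) else 0 with hE
  set G' : ι → ι → R := fun q p => g p q with hG'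
  have hdet : Matrix.det (Matrix.of fun p q => (if p = q then P p else 0) + g p q * Nv q)
      = (Matrix.detRowAlternating (n := ι) (R := R)).toMultilinearMap
          ((fun q => P q • E q) + (fun q => Nv q • G' q)) := by
    rw [← Matrix.det_transpose]
    have hT : (Matrix.of fun p q => (if p = q then P p else 0) + g p q * Nv q)ᵀ
        = ((fun q => P q • E q) + (fun q => Nv q • G' q)) := by
      funext q p
      by_cases hpq : p = q
      · subst hpq
        simp [Matrix.transpose, E, G', Matrix.of_apply, mul_comm]
      · simp [Matrix.transpose, E, G', hpq, Matrix.of_apply, mul_comm]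
    rw [hT]
    rfl
  have expand := (Matrix.detRowAlternating (n := ι) (R := R)).toMultilinearMap.map_add_univ
      (fun q => P q • E q) (fun q => Nv q • G' q)
  rw [hdet, expand, Finset.sum_mul]
  apply Finset.dvd_sum
  intro s _
  have hsplit : s.piecewise (fun q => P q • E q) (fun q => Nv q • G' q)
      = fun i => (s.piecewise P Nv i) • (s.piecewise E G' i) := by
    funext i
    by_cases hi : i ∈ s <;>
      simp [Finset.piecewise_eq_of_mem, Finset.piecewise_eq_of_notMem, hi]
  rw [hsplit]
  rw [show (Matrix.detRowAlternating (n := ι) (R := R)).toMultilinearMap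
        (fun i => (s.piecewise P Nv i) • (s.piecewise E G' i))
      = (∏ i, s.piecewise P Nv i) • (Matrix.detRowAlternating (n := ι) (R := R)).toMultilinearMap
          (s.piecewise E G') from
    MultilinearMap.map_smul_univ _ _ _]
  have hp : (∏ i, s.piecewise P Nv i) * ∏ i, c i
      = (∏ i, Nv i) * ∏ i, s.piecewise b c i := by
    rw [← Finset.prod_mul_distrib, ← Finset.prod_mul_distrib]
    apply Finset.prod_congr rfl
    intro i _
    by_cases hi : i ∈ s
    · simp only [Finset.piecewise_eq_of_mem _ _ _ hi]
      rw [← h i]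
    · simp [Finset.piecewise_eq_of_notMem _ _ _ hi]
  rw [smul_eq_mul, mul_comm (∏ i, s.piecewise P Nv i), mul_assoc, hp]
  exact (dvd_mul_right _ _).mul_left _

/-- For all `ν, N ∈ 𝒩`, the rational number `R(ν,N)` defined in (2.17) is an integer. -/
theorem Rnum_isInt {n : ℕ} (hn : 0 < n) (D : QData n)
    (hd : ∀ a, 0 < D.d a) (hd' : ∀ a, 0 < D.d' a) (he : ∀ a, 0 < D.eps a)
    (he' : ∀ a, 0 < D.eps' a) (hk0 : 0 < D.k0)
    (hcop : (Finset.univ : Finset (Fin n)).gcd D.d = 1)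
    (hsym : ∀ a b, (D.d a : ℤ) * D.CA a b = (D.d b : ℤ) * D.CA b a)
    (hkap : ∀ a, D.k0 * D.eps' a * D.d' a = D.eps a * D.d a)
    (hint1 : ∀ a b : Fin n, ∀ m k : ℕ,
      ((D.eps b * D.d' a : ℕ) : ℤ) ∣ D.CA b a * (min (D.d' a * m) (D.d' b * k) : ℤ))
    (hint2 : ∀ a b : Fin n, ∀ m k : ℕ,
      ((D.eps a * D.d' b : ℕ) : ℤ) ∣ D.CA a b * (min (D.d' a * m) (D.d' b * k) : ℤ))
    (ν N : Fam n) (hν0 : ∀ a, ν (a, 0) = 0) (hN0 : ∀ a, N (a, 0) = 0) :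
    ∃ z : ℤ, Rnum D ν N = (z : ℚ) := by
  classical
  by_cases hN : N = 0
  · exact ⟨1, by simp [Rnum, hN]⟩
  set cpair : Fin n × ℕ → ℤ := fun x =>
    Ring.choose (Pz D ν N x.1 x.2 + (N x : ℤ) - 1) (N x - 1) with hcpair
  set bpair : Fin n × ℕ → ℤ := fun x =>
    Ring.choose (Pz D ν N x.1 x.2 + (N x : ℤ) - 1) (N x) with hbpair
  have hNpos : ∀ x ∈ N.support, 0 < N x :=
    fun x hx => Nat.pos_of_ne_zero (Finsupp.mem_support_iff.mp hx)
  have hkey : ∀ p : N.support,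
      (N p.1 : ℤ) * bpair p.1 = Pz D ν N p.1.1 p.1.2 * cpair p.1 := by
    intro p
    obtain ⟨m, hm⟩ : ∃ m, N p.1 = m + 1 :=
      ⟨N p.1 - 1, (Nat.succ_pred_eq_of_pos (hNpos p.1 p.2)).symm⟩
    have hx : Pz D ν N p.1.1 p.1.2 + (N p.1 : ℤ) - 1 = Pz D ν N p.1.1 p.1.2 + (m : ℤ) := by
      rw [hm]; push_cast; ring
    rw [hcpair, hbpair]
    simp only [hm]
    push_cast
    rw [show Pz D ν N (p.1).1 (p.1).2 + ((m : ℤ) + 1) - 1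
        = Pz D ν N (p.1).1 (p.1).2 + (m : ℤ) from by ring]
    exact choose_key _ m
  have hMz : (Matrix.of fun p q : N.support => Fmat D ν N p.1 q.1)
      = Matrix.of fun p q : N.support =>
          (if p = q then Pz D ν N p.1.1 p.1.2 else 0) +
            (D.CA q.1.1 p.1.1 * (min (D.d' p.1.1 * p.1.2) (D.d' q.1.1 * q.1.2) : ℤ)
              / ((D.eps q.1.1 * D.d' p.1.1 : ℕ) : ℤ)) * (N q.1 : ℤ) := by
    funext p q
    simp only [Matrix.of_apply, Fmat]
    congr 1
    by_cases hpq : p = q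
    · subst hpq; simp
    · have h1 : p.1 ≠ q.1 := fun h => hpq (Subtype.ext h)
      simp [hpq, h1]
  have hdvd := det_aux (fun p : N.support => Pz D ν N p.1.1 p.1.2)
    (fun p : N.support => (N p.1 : ℤ)) (fun p => cpair p.1) (fun p => bpair p.1)
    (fun p q => D.CA q.1.1 p.1.1 * (min (D.d' p.1.1 * p.1.2) (D.d' q.1.1 * q.1.2) : ℤ)
      / ((D.eps q.1.1 * D.d' p.1.1 : ℕ) : ℤ)) hkey
  rw [← hMz] at hdvd
  obtain ⟨z, hz⟩ := hdvd
  refine ⟨z, ?_⟩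
  rw [Rnum, if_neg hN]
  have hdetc : (Matrix.det (Matrix.of fun p q : N.support => (Fmat D ν N p.1 q.1 : ℚ)))
      = (((Matrix.of fun p q : N.support => Fmat D ν N p.1 q.1).det : ℤ) : ℚ) := by
    have h := RingHom.map_det (Int.castRingHom ℚ)
      (Matrix.of fun p q : N.support => Fmat D ν N p.1 q.1)
    exact h.symm
  have hprod : (∏ p ∈ N.support,
        ((N p : ℚ)⁻¹ * genBinom ((Pz D ν N p.1 p.2 : ℚ) + (N p : ℚ) - 1) (N p - 1)))
      = ∏ x ∈ N.support, ((N x : ℚ)⁻¹ * ((cpair x : ℤ) : ℚ)) := by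
    apply Finset.prod_congr rfl
    intro x hx
    congr 1
    have harg : ((Pz D ν N x.1 x.2 : ℚ) + (N x : ℚ) - 1)
        = ((Pz D ν N x.1 x.2 + (N x : ℤ) - 1 : ℤ) : ℚ) := by push_cast; ring
    rw [harg, genBinom_intCast, hcpair]
  have hz2 : (Matrix.of fun p q : N.support => Fmat D ν N p.1 q.1).det
        * ∏ x ∈ N.support, cpair x
      = (∏ x ∈ N.support, (N x : ℤ)) * z := by
    rw [← Finset.prod_coe_sort N.support cpair,
      ← Finset.prod_coe_sort N.support (fun x => (N x : ℤ))]
    exact hz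
  have hz' : (((Matrix.of fun p q : N.support => Fmat D ν N p.1 q.1).det : ℤ) : ℚ)
        * ∏ x ∈ N.support, ((cpair x : ℤ) : ℚ)
      = (∏ x ∈ N.support, (N x : ℚ)) * (z : ℚ) := by
    have h := congrArg (fun t : ℤ => (t : ℚ)) hz2
    push_cast at h
    exact_mod_cast h
  have hQ : (∏ x ∈ N.support, (N x : ℚ)) ≠ 0 :=
    Finset.prod_ne_zero_iff.mpr
      (fun x hx => Nat.cast_ne_zero.mpr (Finsupp.mem_support_iff.mp hx))
  rw [hdetc, hprod, Finset.prod_mul_distrib, Finset.prod_inv_distrib]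
  field_simp
  linear_combination hz'


end
end
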